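/- Let S ⊂ ℂ² be a compact smooth hypersurface with dual map w satisfying z₁w₁ + z₂w₂ = 1 on S, and let T be a tangential derivation on S with Tz₁ = w₂, Tz₂ = −w₁, Tw₁ = Tw₂ = 0. Define the 4-form ν = (z₂dz₁ − z₁dz₂) ∧ dw₁ ∧ dw₂ on S and the pairing ⟨⟨μ,η⟩⟩ = ∫_S μη·ν. Then ⟨⟨Tγ, η⟩⟩ = −⟨⟨γ, Tη⟩⟩ for all smooth functions γ, η on S; i.e., T is skew-adjoint for this pairing. -/

import Mathlib

open Complex ComplexConjugate

/-- Unbundled exterior derivative of an (unbundled) `k`-form on `ℂ²`, evaluated on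
constant vector fields. -/
noncomputable def extD {k : ℕ} (β : (Fin 2 → ℂ) → (Fin k → (Fin 2 → ℂ)) → ℂ)
    (x : Fin 2 → ℂ) (v : Fin (k + 1) → (Fin 2 → ℂ)) : ℂ :=
  ∑ i : Fin (k + 1),
    (-1 : ℂ) ^ (i : ℕ) * fderiv ℝ (fun y => β y (v ∘ i.succAbove)) x (v i)

/-- The 3-form `ν = (z₂dz₁ - z₁dz₂) ∧ dw₁ ∧ dw₂`. -/
noncomputable def nuForm (w : Fin 2 → (Fin 2 → ℂ) → ℂ) (x : Fin 2 → ℂ)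
    (v : Fin 3 → (Fin 2 → ℂ)) : ℂ :=
  Matrix.det (Matrix.of fun i j =>
    (![fun u => x 1 * u 0 - x 0 * u 1,
       fun u => fderiv ℝ (w 0) x u,
       fun u => fderiv ℝ (w 1) x u] : Fin 3 → (Fin 2 → ℂ) → ℂ) i (v j))

/-- Action of the complex vector field `T = τ₀ + i τ₁` (given by a pair of real
vector fields) on functions. -/
noncomputable def Tact (τ : Fin 2 → (Fin 2 → ℂ) → (Fin 2 → ℂ))
    (f : (Fin 2 → ℂ) → ℂ) (x : Fin 2 → ℂ) : ℂ :=
  fderiv ℝ f x (τ 0 x) + Complex.I * fderiv ℝ f x (τ 1 x)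

/-! ### Auxiliary determinant machinery -/

section DetAux

variable {V : Type*}

/-- Wedge of four 1-forms, as a determinant. -/
noncomputable def D4 (L : Fin 4 → V → ℂ) (c : Fin 4 → V) : ℂ :=
  (Matrix.of fun i j => L i (c j)).det

set_option maxHeartbeats 3200000 in
lemma det4_colexp (L : Fin 4 → V → ℂ) (c0 c1 c2 c3 : V) :
    D4 L ![c0,c1,c2,c3]
    = L 0 c0 * (Matrix.of fun i j => (![L 1, L 2, L 3] : Fin 3 → V → ℂ) i (![c1,c2,c3] j)).det
      - L 1 c0 * (Matrix.of fun i j => (![L 0, L 2, L 3] : Fin 3 → V → ℂ) i (![c1,c2,c3] j)).det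
      + L 2 c0 * (Matrix.of fun i j => (![L 0, L 1, L 3] : Fin 3 → V → ℂ) i (![c1,c2,c3] j)).det
      - L 3 c0 * (Matrix.of fun i j => (![L 0, L 1, L 2] : Fin 3 → V → ℂ) i (![c1,c2,c3] j)).det := by
  simp [D4, Matrix.det_succ_column_zero, Fin.sum_univ_succ, Fin.succAbove]
  ring

set_option maxHeartbeats 3200000 in
lemma det5_cofactor (L : Fin 4 → V → ℂ) (r : V → ℂ) (c0 c1 c2 c3 c4 : V) :
    (Matrix.of fun i j => (Matrix.vecCons r L) i (![c0,c1,c2,c3,c4] j)).det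
    = r c0 * D4 L ![c1,c2,c3,c4] - r c1 * D4 L ![c0,c2,c3,c4] + r c2 * D4 L ![c0,c1,c3,c4]
      - r c3 * D4 L ![c0,c1,c2,c4] + r c4 * D4 L ![c0,c1,c2,c3] := by
  simp [D4, Matrix.det_succ_row_zero, Fin.sum_univ_succ, Fin.succAbove]
  ring

end DetAux

/-- Any 5×5 determinant built from real-linear `ℂ`-valued forms evaluated on 5 vectors of the
4-real-dimensional space `ℂ²` vanishes. -/
lemma det5_zero (L : Fin 5 → (Fin 2 → ℂ) → ℂ) (hL : ∀ i, IsLinearMap ℝ (L i))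
    (c : Fin 5 → Fin 2 → ℂ) :
    (Matrix.of fun i j => L i (c j)).det = 0 := by
  have hfr : Module.finrank ℝ (Fin 2 → ℂ) = 4 := by
    simp [Module.finrank_pi_fintype, Complex.finrank_real_complex]
  have hdep : ¬ LinearIndependent ℝ c := by
    intro h
    have := h.fintype_card_le_finrank
    rw [hfr] at this
    simp at this
  obtain ⟨g, hg, i₀, hi₀⟩ := Fintype.not_linearIndependent_iff.mp hdep
  apply Matrix.exists_mulVec_eq_zero_iff.mp
  refine ⟨fun j => (g j : ℂ), ?_, ?_⟩
  · intro h0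
    have := congrFun h0 i₀
    simp only [Pi.zero_apply, Complex.ofReal_eq_zero] at this
    exact hi₀ this
  · funext i
    have hsum := map_sum (IsLinearMap.mk' _ (hL i)) (fun j => g j • c j) Finset.univ
    simp only [IsLinearMap.mk'_apply] at hsum
    rw [hg] at hsum
    have hz : L i 0 = 0 := by simpa using (hL i).map_smul 0 0
    rw [hz] at hsum
    simp only [Matrix.mulVec, dotProduct, Matrix.of_apply]
    rw [Finset.sum_congr rfl (fun j _ => mul_comm (L i (c j)) ((g j : ℂ)))]
    rw [Finset.sum_congr rfl (fun j _ => by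
      rw [show (g j : ℂ) * L i (c j) = L i (g j • c j) by
        rw [(hL i).map_smul]; simp [Complex.real_smul]])]
    rw [← hsum]
    rfl

lemma extD_three (β : (Fin 2 → ℂ) → (Fin 2 → (Fin 2 → ℂ)) → ℂ) (x : Fin 2 → ℂ)
    (v : Fin 3 → (Fin 2 → ℂ)) :
    extD β x v = fderiv ℝ (fun y => β y (v ∘ Fin.succAbove 0)) x (v 0)
      - fderiv ℝ (fun y => β y (v ∘ Fin.succAbove 1)) x (v 1)
      + fderiv ℝ (fun y => β y (v ∘ Fin.succAbove 2)) x (v 2) := by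
  rw [extD, Fin.sum_univ_three]
  norm_num
  rw [sub_eq_add_neg]

/-- Rows of the 4-form `Ω = df ∧ α ∧ dw₁ ∧ dw₂` (with `f = γη`,
`α = z₂ dz₁ - z₁ dz₂`). -/
noncomputable def Row (γ η : (Fin 2 → ℂ) → ℂ) (w : Fin 2 → (Fin 2 → ℂ) → ℂ)
    (y : Fin 2 → ℂ) : Fin 4 → (Fin 2 → ℂ) → ℂ :=
  ![fun u => fderiv ℝ γ y u * η y + γ y * fderiv ℝ η y u,
    fun u => y 1 * u 0 - y 0 * u 1,
    fun u => fderiv ℝ (w 0) y u,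
    fun u => fderiv ℝ (w 1) y u]

lemma Row_smooth (γ η : (Fin 2 → ℂ) → ℂ) (w : Fin 2 → (Fin 2 → ℂ) → ℂ)
    (hγ : ContDiff ℝ (⊤ : ℕ∞) γ) (hη : ContDiff ℝ (⊤ : ℕ∞) η) (hw : ∀ j, ContDiff ℝ (⊤ : ℕ∞) (w j))
    (c : (Fin 2 → ℂ) → (Fin 2 → ℂ)) (hc : ContDiff ℝ (⊤ : ℕ∞) c) (i : Fin 4) :
    ContDiff ℝ (⊤ : ℕ∞) (fun y => Row γ η w y i (c y)) := by
  have hyk : ∀ k : Fin 2, ContDiff ℝ (⊤ : ℕ∞) (fun y : Fin 2 → ℂ => y k) := fun k =>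
    (ContinuousLinearMap.proj (R := ℝ) (φ := fun _ : Fin 2 => ℂ) k).contDiff
  have hck : ∀ k : Fin 2, ContDiff ℝ (⊤ : ℕ∞) (fun y => c y k) := fun k => (contDiff_pi.mp hc k)
  fin_cases i <;>
    simp only [Row, Matrix.cons_val_zero, Matrix.cons_val_one, Matrix.head_cons,
      Matrix.cons_val_succ, Fin.isValue]
  · exact (((hγ.fderiv_right (by simp)).clm_apply hc).mul hη).add
      (hγ.mul ((hη.fderiv_right (by simp)).clm_apply hc))
  · exact ((hyk 1).mul (hck 0)).sub ((hyk 0).mul (hck 1))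
  · exact ((hw 0).fderiv_right (by simp)).clm_apply hc
  · exact ((hw 1).fderiv_right (by simp)).clm_apply hc

lemma D4Row_smooth (γ η : (Fin 2 → ℂ) → ℂ) (w : Fin 2 → (Fin 2 → ℂ) → ℂ)
    (hγ : ContDiff ℝ (⊤ : ℕ∞) γ) (hη : ContDiff ℝ (⊤ : ℕ∞) η) (hw : ∀ j, ContDiff ℝ (⊤ : ℕ∞) (w j))
    (c : (Fin 2 → ℂ) → Fin 4 → (Fin 2 → ℂ)) (hc : ∀ j, ContDiff ℝ (⊤ : ℕ∞) (fun y => c y j)) :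
    ContDiff ℝ (⊤ : ℕ∞) (fun y => D4 (Row γ η w y) (c y)) := by
  have hrow : ∀ (i : Fin 4) (j : Fin 4), ContDiff ℝ (⊤ : ℕ∞) (fun y => Row γ η w y i (c y j)) :=
    fun i j => Row_smooth γ η w hγ hη hw _ (hc j) i
  have h1 : (fun y => D4 (Row γ η w y) (c y))
      = fun y => ∑ σ : Equiv.Perm (Fin 4),
          ((Equiv.Perm.sign σ : ℤ) : ℂ) * ∏ i, Row γ η w y (σ i) (c y i) := by
    funext y
    simp [D4, Matrix.det_apply, Units.smul_def, zsmul_eq_mul]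
  rw [h1]
  apply ContDiff.sum
  intro σ _
  apply contDiff_const.mul
  have h2 : (fun y => ∏ i : Fin 4, Row γ η w y (σ i) (c y i))
      = fun y => (Row γ η w y (σ 0) (c y 0) * Row γ η w y (σ 1) (c y 1))
          * Row γ η w y (σ 2) (c y 2) * Row γ η w y (σ 3) (c y 3) := by
    funext y; rw [Fin.prod_univ_four]
  rw [h2]
  exact (((hrow _ _).mul (hrow _ _)).mul (hrow _ _)).mul (hrow _ _)

/-- An analytic vector field `X` with `dρ(X) = 1` on `S`. -/
lemma cutoff_field (ρ : (Fin 2 → ℂ) → ℝ) (hρ : ContDiff ℝ (⊤ : ℕ∞) ρ)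
    (S : Set (Fin 2 → ℂ)) (hS : S = {x | ρ x = 0})
    (hreg : ∀ x ∈ S, fderiv ℝ ρ x ≠ 0) :
    ∃ X : (Fin 2 → ℂ) → (Fin 2 → ℂ), ContDiff ℝ (⊤ : ℕ∞) X ∧ ∀ x ∈ S, fderiv ℝ ρ x (X x) = 1 := by
  classical
  set b : Fin 4 → (Fin 2 → ℂ) := ![![1,0], ![Complex.I,0], ![0,1], ![0,Complex.I]] with hbdef
  set g : (Fin 2 → ℂ) → ℝ := fun x => ∑ m, (fderiv ℝ ρ x (b m))^2 with hgdef
  have hgsm : ContDiff ℝ (⊤ : ℕ∞) g := by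
    apply ContDiff.sum
    intro m _
    exact ((hρ.fderiv_right (by simp)).clm_apply contDiff_const).pow 2
  have hgnn : ∀ x, 0 ≤ g x := fun x => Finset.sum_nonneg fun m _ => sq_nonneg _
  have hdecomp : ∀ u : Fin 2 → ℂ,
      u = (u 0).re • b 0 + ((u 0).im • b 1 + ((u 1).re • b 2 + (u 1).im • b 3)) := by
    intro u
    funext k
    fin_cases k <;> simp [hbdef, Complex.real_smul]
  have hgpos : ∀ x ∈ S, 0 < g x := by
    intro x hx
    rcases lt_or_eq_of_le (hgnn x) with h | h
    · exact h
    · exfalso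
      apply hreg x hx
      have hz : ∀ m, fderiv ℝ ρ x (b m) = 0 := by
        intro m
        have := (Finset.sum_eq_zero_iff_of_nonneg (fun m _ => sq_nonneg
          (fderiv ℝ ρ x (b m)))).mp h.symm m (Finset.mem_univ m)
        exact pow_eq_zero_iff two_ne_zero |>.mp this
      ext u
      rw [hdecomp u]
      simp only [map_add, map_smul, hz, smul_zero, add_zero, ContinuousLinearMap.zero_apply]
  have hden : ∀ x, g x ^ 2 + ρ x ^ 2 ≠ 0 := by
    intro x
    by_cases hx : x ∈ S
    · have := hgpos x hx
      positivity
    · have : ρ x ≠ 0 := by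
        rw [hS] at hx
        simpa using hx
      positivity
  refine ⟨fun x => (g x / (g x ^ 2 + ρ x ^ 2)) • (∑ m, (fderiv ℝ ρ x (b m)) • b m), ?_, ?_⟩
  · apply ContDiff.fun_smul
    · exact hgsm.div ((hgsm.pow 2).add (hρ.pow 2)) hden
    · apply ContDiff.sum
      intro m _
      exact ((hρ.fderiv_right (by simp)).clm_apply contDiff_const).smul contDiff_const
  · intro x hx
    have hρ0 : ρ x = 0 := by rw [hS] at hx; exact hx
    rw [map_smul, map_sum]
    simp only [map_smul, smul_eq_mul]
    have : ∑ m, fderiv ℝ ρ x (b m) * fderiv ℝ ρ x (b m) = g x := by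
      rw [hgdef]; congr 1; funext m; ring
    rw [this, hρ0]
    have hg0 : g x ≠ 0 := ne_of_gt (hgpos x hx)
    field_simp
    ring

set_option maxHeartbeats 6400000 in
set_option maxRecDepth 100000 in
/-- on a compact hypersurface `S ⊂ ℂ²` with dual map `w`
(`z₁w₁ + z₂w₂ = 1` on `S`) and tangential derivation `T` with `Tz₁ = w₂`,
`Tz₂ = -w₁`, `Tw₁ = Tw₂ = 0`, the pairing `⟨⟨μ,η⟩⟩ = ∫_S μη·ν` with
`ν = (z₂dz₁ - z₁dz₂) ∧ dw₁ ∧ dw₂` satisfies `⟨⟨Tγ,η⟩⟩ = -⟨⟨γ,Tη⟩⟩`.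
Integration of 3-forms over `S` is axiomatized as a linear functional `I`
vanishing on exterior derivatives (Stokes on the closed manifold `S`) and on
forms vanishing along `S`. -/
theorem stmt13 (ρ : (Fin 2 → ℂ) → ℝ) (hρ : ContDiff ℝ (⊤ : ℕ∞) ρ)
    (S : Set (Fin 2 → ℂ)) (hS : S = {x | ρ x = 0})
    (hcpt : IsCompact S) (hreg : ∀ x ∈ S, fderiv ℝ ρ x ≠ 0)
    (w : Fin 2 → (Fin 2 → ℂ) → ℂ) (hw : ∀ j, ContDiff ℝ (⊤ : ℕ∞) (w j))
    (hrel : ∀ x ∈ S, x 0 * w 0 x + x 1 * w 1 x = 1)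
    (τ : Fin 2 → (Fin 2 → ℂ) → (Fin 2 → ℂ)) (hτ : ∀ i, ContDiff ℝ (⊤ : ℕ∞) (τ i))
    (htan : ∀ x ∈ S, ∀ i, fderiv ℝ ρ x (τ i x) = 0)
    (hTz₁ : ∀ x ∈ S, Tact τ (fun y => y 0) x = w 1 x)
    (hTz₂ : ∀ x ∈ S, Tact τ (fun y => y 1) x = -(w 0 x))
    (hTw : ∀ j, ∀ x ∈ S, Tact τ (w j) x = 0)
    (I : ((Fin 2 → ℂ) → (Fin 3 → (Fin 2 → ℂ)) → ℂ) →ₗ[ℂ] ℂ)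
    (hStokes : ∀ β : (Fin 2 → ℂ) → (Fin 2 → (Fin 2 → ℂ)) → ℂ,
      (∀ v : Fin 2 → (Fin 2 → ℂ), ContDiff ℝ (⊤ : ℕ∞) (fun y => β y v)) → I (extD β) = 0)
    (hloc : ∀ β : (Fin 2 → ℂ) → (Fin 3 → (Fin 2 → ℂ)) → ℂ,
      (∀ x ∈ S, ∀ v, β x v = 0) → I β = 0)
    (γ η : (Fin 2 → ℂ) → ℂ) (hγ : ContDiff ℝ (⊤ : ℕ∞) γ) (hη : ContDiff ℝ (⊤ : ℕ∞) η) :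
    I (fun x v => Tact τ γ x * η x * nuForm w x v)
      = - I (fun x v => γ x * Tact τ η x * nuForm w x v) := by
  obtain ⟨X, hX, hX1⟩ := cutoff_field ρ hρ S hS hreg
  -- the 2-forms fed into Stokes
  set BW : (Fin 2 → ℂ) → (Fin 2 → (Fin 2 → ℂ)) → ℂ := fun y u =>
    γ y * η y * (fderiv ℝ (w 0) y (u 0) * fderiv ℝ (w 1) y (u 1)
      - fderiv ℝ (w 0) y (u 1) * fderiv ℝ (w 1) y (u 0)) with hBWdef
  set B : Fin 2 → (Fin 2 → ℂ) → (Fin 2 → (Fin 2 → ℂ)) → ℂ := fun m y u =>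
    (ρ y : ℂ) * -(D4 (Row γ η w y) ![X y, τ m y, u 0, u 1]) with hBdef
  -- smoothness of the Stokes 2-forms
  have hwd : ∀ (j : Fin 2) (a : Fin 2 → ℂ), ContDiff ℝ (⊤ : ℕ∞) (fun y => fderiv ℝ (w j) y a) :=
    fun j a => ((hw j).fderiv_right (by simp)).clm_apply contDiff_const
  have hBWsm : ∀ u : Fin 2 → (Fin 2 → ℂ), ContDiff ℝ (⊤ : ℕ∞) (fun y => BW y u) := by
    intro u
    simp only [hBWdef]
    exact (hγ.mul hη).mul ((((hwd 0 (u 0)).mul (hwd 1 (u 1)))).sub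
      ((hwd 0 (u 1)).mul (hwd 1 (u 0))))
  have hBsigma : ∀ (m : Fin 2) (u : Fin 2 → (Fin 2 → ℂ)),
      ContDiff ℝ (⊤ : ℕ∞) (fun y => -(D4 (Row γ η w y) ![X y, τ m y, u 0, u 1])) := by
    intro m u
    apply ContDiff.neg
    apply D4Row_smooth γ η w hγ hη hw
    intro j
    fin_cases j <;> simp only [Matrix.cons_val_zero, Matrix.cons_val_one, Matrix.head_cons,
      Matrix.cons_val_succ, Fin.isValue]
    · exact hX
    · exact hτ m
    · exact contDiff_const
    · exact contDiff_const
  have hBsm : ∀ (m : Fin 2) (u : Fin 2 → (Fin 2 → ℂ)), ContDiff ℝ (⊤ : ℕ∞) (fun y => B m y u) := by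
    intro m u
    simp only [hBdef]
    exact (Complex.ofRealCLM.contDiff.comp hρ).mul (hBsigma m u)
  -- pointwise vanishing on S of the difference form
  have key : ∀ x ∈ S, ∀ v : Fin 3 → (Fin 2 → ℂ),
      (Tact τ γ x * η x * nuForm w x v + γ x * Tact τ η x * nuForm w x v)
        - extD BW x v - extD (B 0) x v - Complex.I * extD (B 1) x v = 0 := by
    intro x hx v
    have hρ0 : ρ x = 0 := by rw [hS] at hx; exact hx
    have hγ' : HasFDerivAt γ (fderiv ℝ γ x) x := ((hγ.differentiable (by simp)) x).hasFDerivAt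
    have hη' : HasFDerivAt η (fderiv ℝ η x) x := ((hη.differentiable (by simp)) x).hasFDerivAt
    have hwd' : ∀ (j : Fin 2) (a : Fin 2 → ℂ), HasFDerivAt (fun y => fderiv ℝ (w j) y a)
        (fderiv ℝ (fun y => fderiv ℝ (w j) y a) x) x := fun j a =>
      (((hwd j a).differentiable (by simp)) x).hasFDerivAt
    -- Hessian symmetry
    have hsy : ∀ (j : Fin 2) (a b : Fin 2 → ℂ),
        fderiv ℝ (fun y => fderiv ℝ (w j) y a) x b
          = fderiv ℝ (fun y => fderiv ℝ (w j) y b) x a := by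
      intro j a b
      have hd : DifferentiableAt ℝ (fderiv ℝ (w j)) x :=
        (((hw j).fderiv_right (m := 1) (WithTop.coe_le_coe.mpr le_top)).differentiable one_ne_zero).differentiableAt
      rw [fderiv_clm_apply hd (differentiableAt_const a),
        fderiv_clm_apply hd (differentiableAt_const b)]
      simp only [ContinuousLinearMap.add_apply, ContinuousLinearMap.flip_apply,
        ContinuousLinearMap.comp_apply, fderiv_const, fderiv_const_apply, Pi.zero_apply,
        ContinuousLinearMap.comp_zero, ContinuousLinearMap.zero_apply, add_zero, zero_add]
      exact second_derivative_symmetric (fun y => ((hw j).differentiable (by simp) y).hasFDerivAt)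
        hd.hasFDerivAt b a
    -- slice computation for BW
    have sliceBW : ∀ a b t : Fin 2 → ℂ,
        fderiv ℝ (fun y => γ y * η y * (fderiv ℝ (w 0) y a * fderiv ℝ (w 1) y b
          - fderiv ℝ (w 0) y b * fderiv ℝ (w 1) y a)) x t
        = (fderiv ℝ γ x t * η x + γ x * fderiv ℝ η x t)
            * (fderiv ℝ (w 0) x a * fderiv ℝ (w 1) x b
              - fderiv ℝ (w 0) x b * fderiv ℝ (w 1) x a)
          + γ x * η x * (fderiv ℝ (fun y => fderiv ℝ (w 0) y a) x t * fderiv ℝ (w 1) x b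
            + fderiv ℝ (w 0) x a * fderiv ℝ (fun y => fderiv ℝ (w 1) y b) x t
            - fderiv ℝ (fun y => fderiv ℝ (w 0) y b) x t * fderiv ℝ (w 1) x a
            - fderiv ℝ (w 0) x b * fderiv ℝ (fun y => fderiv ℝ (w 1) y a) x t) := by
      intro a b t
      have H := ((hγ'.fun_mul hη').fun_mul
        (((hwd' 0 a).fun_mul (hwd' 1 b)).fun_sub ((hwd' 0 b).fun_mul (hwd' 1 a)))).fderiv
      rw [H]
      simp only [ContinuousLinearMap.add_apply, ContinuousLinearMap.smul_apply,
        ContinuousLinearMap.sub_apply, smul_eq_mul]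
      ring
    -- slice computation for B m
    have sliceB : ∀ (m : Fin 2) (a b t : Fin 2 → ℂ),
        fderiv ℝ (fun y => (ρ y : ℂ) * -(D4 (Row γ η w y) ![X y, τ m y, a, b])) x t
        = (fderiv ℝ ρ x t : ℂ) * -(D4 (Row γ η w x) ![X x, τ m x, a, b]) := by
      intro m a b t
      have hσ : DifferentiableAt ℝ (fun y => -(D4 (Row γ η w y) ![X y, τ m y, a, b])) x :=
        ((hBsigma m ![a, b]).differentiable (by simp)) x
      have hρC : HasFDerivAt (fun y => (ρ y : ℂ))
          (Complex.ofRealCLM.comp (fderiv ℝ ρ x)) x :=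
        Complex.ofRealCLM.hasFDerivAt.comp x ((hρ.differentiable (by simp)) x).hasFDerivAt
      have H := (hρC.fun_mul hσ.hasFDerivAt).fderiv
      rw [H]
      simp only [ContinuousLinearMap.add_apply, ContinuousLinearMap.smul_apply,
        ContinuousLinearMap.comp_apply, Complex.ofRealCLM_apply, smul_eq_mul, hρ0,
        Complex.ofReal_zero, zero_mul, zero_add]
      ring
    -- linearity of the five rows
    have lr : IsLinearMap ℝ (fun u => ((fderiv ℝ ρ x u : ℝ) : ℂ)) :=
      ⟨fun a b => by simp, fun c a => by simp [Complex.real_smul]⟩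
    have l0 : IsLinearMap ℝ (fun u => fderiv ℝ γ x u * η x + γ x * fderiv ℝ η x u) :=
      ⟨fun a b => by simp [map_add]; ring, fun c a => by
        simp [map_smul, Complex.real_smul, smul_eq_mul]; ring⟩
    have l1 : IsLinearMap ℝ (fun u : Fin 2 → ℂ => x 1 * u 0 - x 0 * u 1) :=
      ⟨fun a b => by simp [Pi.add_apply]; ring, fun c a => by
        simp [Pi.smul_apply, Complex.real_smul, smul_eq_mul]; ring⟩
    have lw : ∀ j : Fin 2, IsLinearMap ℝ (fun u => fderiv ℝ (w j) x u) :=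
      fun j => ⟨fun a b => by simp [map_add], fun c a => by
        simp [map_smul, Complex.real_smul, smul_eq_mul]⟩
    have hlin : ∀ i : Fin 5, IsLinearMap ℝ
        ((Matrix.vecCons (fun u => ((fderiv ℝ ρ x u : ℝ) : ℂ)) (Row γ η w x)) i) := by
      intro i
      fin_cases i
      · exact lr
      · exact l0
      · exact l1
      · exact lw 0
      · exact lw 1
    -- the vanishing 5x5 determinant identities
    have hfive : ∀ m : Fin 2, D4 (Row γ η w x) ![τ m x, v 0, v 1, v 2]
        = -(((fderiv ℝ ρ x (v 0) : ℝ) : ℂ) * D4 (Row γ η w x) ![X x, τ m x, v 1, v 2]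
          - ((fderiv ℝ ρ x (v 1) : ℝ) : ℂ) * D4 (Row γ η w x) ![X x, τ m x, v 0, v 2]
          + ((fderiv ℝ ρ x (v 2) : ℝ) : ℂ) * D4 (Row γ η w x) ![X x, τ m x, v 0, v 1]) := by
      intro m
      have h5 := det5_zero _ hlin ![X x, τ m x, v 0, v 1, v 2]
      rw [det5_cofactor (Row γ η w x) (fun u => ((fderiv ℝ ρ x u : ℝ) : ℂ))
        (X x) (τ m x) (v 0) (v 1) (v 2)] at h5
      rw [hX1 x hx, htan x hx m] at h5
      simp only [Complex.ofReal_one, Complex.ofReal_zero, one_mul, zero_mul] at h5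
      linear_combination h5
    -- succAbove computations
    have e0 : v ∘ Fin.succAbove (0 : Fin 3) = ![v 1, v 2] := by
      funext i; fin_cases i <;> rfl
    have e1 : v ∘ Fin.succAbove (1 : Fin 3) = ![v 0, v 2] := by
      funext i; fin_cases i <;> rfl
    have e2 : v ∘ Fin.succAbove (2 : Fin 3) = ![v 0, v 1] := by
      funext i; fin_cases i <;> rfl
    -- value of extD BW
    have hBWval : extD BW x v = (Matrix.of fun i j =>
        (![Row γ η w x 0, Row γ η w x 2, Row γ η w x 3] : Fin 3 → (Fin 2 → ℂ) → ℂ) i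
          (![v 0, v 1, v 2] j)).det := by
      rw [extD_three]
      simp only [e0, e1, e2, hBWdef, Matrix.cons_val_zero, Matrix.cons_val_one,
        Matrix.head_cons]
      rw [sliceBW, sliceBW, sliceBW]
      rw [Matrix.det_fin_three]
      simp only [Matrix.of_apply, Matrix.cons_val', Matrix.cons_val_zero, Matrix.empty_val',
        Matrix.cons_val_fin_one, Matrix.cons_val_one, Matrix.cons_val_two, Matrix.cons_val_three,
        Matrix.head_cons, Matrix.head_fin_const, Matrix.vecHead, Matrix.vecTail,
        Matrix.cons_val_succ, Function.comp_apply, Row, Fin.isValue]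
      linear_combination (γ x * η x * fderiv ℝ (w 1) x (v 2)) * hsy 0 (v 1) (v 0)
        + (γ x * η x * fderiv ℝ (w 1) x (v 1)) * hsy 0 (v 0) (v 2)
        + (γ x * η x * fderiv ℝ (w 1) x (v 0)) * hsy 0 (v 2) (v 1)
        + (γ x * η x * fderiv ℝ (w 0) x (v 1)) * hsy 1 (v 2) (v 0)
        + (γ x * η x * fderiv ℝ (w 0) x (v 0)) * hsy 1 (v 1) (v 2)
        + (γ x * η x * fderiv ℝ (w 0) x (v 2)) * hsy 1 (v 0) (v 1)
    -- value of extD (B m)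
    have hBval : ∀ m : Fin 2, extD (B m) x v
        = D4 (Row γ η w x) ![τ m x, v 0, v 1, v 2] := by
      intro m
      rw [extD_three]
      simp only [e0, e1, e2, hBdef, Matrix.cons_val_zero, Matrix.cons_val_one,
        Matrix.head_cons]
      rw [sliceB, sliceB, sliceB]
      rw [hfive m]
      push_cast
      ring
    -- nuForm as a 3x3 determinant with Row entries
    have hnu : nuForm w x v = (Matrix.of fun i j =>
        (![Row γ η w x 1, Row γ η w x 2, Row γ η w x 3] : Fin 3 → (Fin 2 → ℂ) → ℂ) i
          (![v 0, v 1, v 2] j)).det := by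
      unfold nuForm
      congr 1
      ext i j
      fin_cases i <;> fin_cases j <;> simp [Row]
    -- tangential relations
    have hproj : ∀ (k : Fin 2) (t : Fin 2 → ℂ), fderiv ℝ (fun y : Fin 2 → ℂ => y k) x t = t k := by
      intro k t
      rw [show (fun y : Fin 2 → ℂ => y k)
          = ⇑(ContinuousLinearMap.proj (R := ℝ) (φ := fun _ : Fin 2 => ℂ) k) from rfl,
        ContinuousLinearMap.fderiv]
      rfl
    have h1 := hTz₁ x hx
    have h2 := hTz₂ x hx
    simp only [Tact, hproj] at h1 h2
    have hPc := hTw 0 x hx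
    have hQc := hTw 1 x hx
    simp only [Tact] at hPc hQc
    have hrelx := hrel x hx
    -- assemble
    rw [hBWval, hBval 0, hBval 1,
      det4_colexp (Row γ η w x) (τ 0 x) (v 0) (v 1) (v 2),
      det4_colexp (Row γ η w x) (τ 1 x) (v 0) (v 1) (v 2), hnu]
    set n123 := (Matrix.of fun i j =>
      (![Row γ η w x 1, Row γ η w x 2, Row γ η w x 3] : Fin 3 → (Fin 2 → ℂ) → ℂ) i
        (![v 0, v 1, v 2] j)).det with hn123
    set n023 := (Matrix.of fun i j =>
      (![Row γ η w x 0, Row γ η w x 2, Row γ η w x 3] : Fin 3 → (Fin 2 → ℂ) → ℂ) i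
        (![v 0, v 1, v 2] j)).det with hn023
    set n013 := (Matrix.of fun i j =>
      (![Row γ η w x 0, Row γ η w x 1, Row γ η w x 3] : Fin 3 → (Fin 2 → ℂ) → ℂ) i
        (![v 0, v 1, v 2] j)).det with hn013
    set n012 := (Matrix.of fun i j =>
      (![Row γ η w x 0, Row γ η w x 1, Row γ η w x 2] : Fin 3 → (Fin 2 → ℂ) → ℂ) i
        (![v 0, v 1, v 2] j)).det with hn012
    simp only [Tact, Row, Matrix.cons_val_zero, Matrix.cons_val_one, Matrix.head_cons,
      Matrix.cons_val_two, Matrix.cons_val_three, Matrix.vecHead, Matrix.vecTail,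
      Matrix.cons_val_succ, Function.comp_apply, Fin.isValue]
    linear_combination (n023 * (x 1)) * h1 - (n023 * (x 0)) * h2 + n023 * hrelx
      - n013 * hPc + n012 * hQc
  -- assemble
  have hD : I (fun x v =>
      (Tact τ γ x * η x * nuForm w x v + γ x * Tact τ η x * nuForm w x v)
        - extD BW x v - extD (B 0) x v - Complex.I * extD (B 1) x v) = 0 :=
    hloc _ key
  have hfun : (fun x v => Tact τ γ x * η x * nuForm w x v)
      + (fun x v => γ x * Tact τ η x * nuForm w x v)
      = (fun x v =>
          (Tact τ γ x * η x * nuForm w x v + γ x * Tact τ η x * nuForm w x v)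
            - extD BW x v - extD (B 0) x v - Complex.I * extD (B 1) x v)
        + (extD BW + (extD (B 0) + Complex.I • extD (B 1))) := by
    funext x v
    simp only [Pi.add_apply, Pi.smul_apply, smul_eq_mul]
    ring
  have heq : I (fun x v => Tact τ γ x * η x * nuForm w x v)
      + I (fun x v => γ x * Tact τ η x * nuForm w x v) = 0 := by
    rw [← map_add, hfun, map_add, map_add, map_add, map_smul, hD,
      hStokes BW hBWsm, hStokes (B 0) (hBsm 0), hStokes (B 1) (hBsm 1)]
    simp
  linear_combination heq
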